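/- Theorem 2, claim 1 (correctness of successful proof-search): For every database D, rule set R, and BCQ ∃x⃗ q(x⃗), if there exists a proof of the sequent D ⊢ ∃x⃗ q(x⃗) in G3(R), then (D,R) ⊨ ∃x⃗ q(x⃗), i.e., every interpretation modeling D ∪ R satisfies ∃x⃗ q(x⃗). -/
import Mathlib


/- ## Syntax: terms, atoms, first-order formulas -/

/-- Terms: constants `C` and variables `V` (both indexed by ℕ, disjoint by construction). -/
inductive Tm where
  | const : ℕ → Tm
  | var : ℕ → Tm
deriving DecidableEq

/-- An atom `p(t₁,…,tₙ)`.  Predicate `0` is reserved for the special unary predicate `⊤`;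
    predicates of the language `𝓛` are the predicates `p ≠ 0`. -/
structure Atom where
  pred : ℕ
  args : List Tm
deriving DecidableEq

/-- First-order formulas, generated from atoms by `¬`, `∧` and `∃x`. -/
inductive Fml where
  | atom : ℕ → List Tm → Fml
  | not : Fml → Fml
  | and : Fml → Fml → Fml
  | ex : ℕ → Fml → Fml
deriving DecidableEq

def Atom.toFml (a : Atom) : Fml := Fml.atom a.pred a.args

/-- Extension of a substitution on variables to all terms (constants are fixed). -/
def Tm.app (μ : ℕ → Tm) : Tm → Tm
  | Tm.const c => Tm.const c
  | Tm.var x => μ x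

def Atom.map (f : Tm → Tm) (a : Atom) : Atom := ⟨a.pred, a.args.map f⟩

def Atom.subst (μ : ℕ → Tm) (a : Atom) : Atom := a.map (Tm.app μ)

/-- `Tm.subst t x` substitutes the term `t` for the variable `x`. -/
def Tm.subst (t : Tm) (x : ℕ) : Tm → Tm
  | Tm.const c => Tm.const c
  | Tm.var y => if y = x then t else Tm.var y

/-- `Fml.subst t x φ` is `φ(t/x)`: substitute `t` for every free occurrence of `x` in `φ`. -/
def Fml.subst (t : Tm) (x : ℕ) : Fml → Fml
  | Fml.atom p ts => Fml.atom p (ts.map (Tm.subst t x))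
  | Fml.not φ => Fml.not (Fml.subst t x φ)
  | Fml.and φ ψ => Fml.and (Fml.subst t x φ) (Fml.subst t x ψ)
  | Fml.ex y φ => if y = x then Fml.ex y φ else Fml.ex y (Fml.subst t x φ)

/-- Free variables of a formula. -/
def Fml.fv : Fml → Set ℕ
  | Fml.atom _ ts => {x | Tm.var x ∈ ts}
  | Fml.not φ => φ.fv
  | Fml.and φ ψ => φ.fv ∪ ψ.fv
  | Fml.ex y φ => φ.fv \ {y}

/-- Free variables and constants occurring in a formula. -/
def Fml.tms : Fml → Set Tm
  | Fml.atom _ ts => {t | t ∈ ts}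
  | Fml.not φ => φ.tms
  | Fml.and φ ψ => φ.tms ∪ ψ.tms
  | Fml.ex y φ => φ.tms \ {Tm.var y}

/-- A formula of the language `𝓛`, i.e. not mentioning the special predicate `⊤`. -/
def Fml.noTop : Fml → Prop
  | Fml.atom p _ => p ≠ 0
  | Fml.not φ => φ.noTop
  | Fml.and φ ψ => φ.noTop ∧ ψ.noTop
  | Fml.ex _ φ => φ.noTop

def Atom.tms (a : Atom) : Set Tm := {t | t ∈ a.args}

/-- Terms occurring in an instance. -/
def itms (I : Set Atom) : Set Tm := ⋃ a ∈ I, a.tms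

/-- `T(Γ)`: free variables and constants occurring in a set of formulas. -/
def tmsOf (S : Set Fml) : Set Tm := ⋃ φ ∈ S, φ.tms

/-- The atom `⊤(c)`. -/
def topAtom (c : ℕ) : Atom := ⟨0, [Tm.const c]⟩

/-- `I^⊤ = I ∪ {⊤(c) | c ∈ C}`. -/
def mfy (I : Set Atom) : Set Atom := I ∪ Set.range topAtom

/-- An instance is an interpretation iff `I^⊤ = I`. -/
def IsInterp (I : Set Atom) : Prop := mfy I = I

/-- An assignment into a set of terms: maps each variable into `T` (constants are fixed via `Tm.app`). -/
def IsAsg (T : Set Tm) (μ : ℕ → Tm) : Prop := ∀ x : ℕ, μ x ∈ T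

/- ## Semantics -/

/-- Satisfaction `I,μ ⊨ φ`. -/
def Sat (I : Set Atom) : (ℕ → Tm) → Fml → Prop
  | μ, Fml.atom p ts => (⟨p, ts.map (Tm.app μ)⟩ : Atom) ∈ I
  | μ, Fml.not φ => ¬ Sat I μ φ
  | μ, Fml.and φ ψ => Sat I μ φ ∧ Sat I μ ψ
  | μ, Fml.ex x φ => ∃ t ∈ itms I, Sat I (Function.update μ x t) φ

/-- `I ⊨ φ`: satisfaction under every `I`-assignment. -/
def SatF (I : Set Atom) (φ : Fml) : Prop :=
  ∀ μ : ℕ → Tm, IsAsg (itms I) μ → Sat I μ φ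

/-- Satisfaction under some `I`-assignment (used for instances that need not be interpretations). -/
def SatI (I : Set Atom) (φ : Fml) : Prop :=
  ∃ μ : ℕ → Tm, IsAsg (itms I) μ ∧ Sat I μ φ

/- ## Existential rules -/

/-- An existential rule `ρ = ∀x⃗y⃗ (β(x⃗,y⃗) → ∃z⃗ α(y⃗,z⃗))`: `body` is `β`, `head` is `α`
    (conjunctions of atoms identified with finite sets of atoms), and `evars` is `z⃗`. -/
structure ERule where
  body : Finset Atom
  head : Finset Atom
  evars : Finset ℕ
  body_nonempty : body.Nonempty
  head_nonempty : head.Nonempty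
  body_noTop : ∀ a ∈ body, a.pred ≠ 0
  head_noTop : ∀ a ∈ head, a.pred ≠ 0
  body_evars : ∀ a ∈ body, ∀ z ∈ evars, Tm.var z ∉ a.args
  head_frontier : ∀ a ∈ head, ∀ x : ℕ, Tm.var x ∈ a.args → x ∉ evars →
    ∃ b ∈ body, Tm.var x ∈ b.args

/-- `I ⊨ ρ` for an existential rule `ρ` (satisfaction of its universal closure). -/
def SatRule (I : Set Atom) (ρ : ERule) : Prop :=
  ∀ μ : ℕ → Tm, IsAsg (itms I) μ → (∀ a ∈ ρ.body, Atom.subst μ a ∈ I) →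
    ∃ ν : ℕ → Tm, IsAsg (itms I) ν ∧ (∀ x : ℕ, x ∉ ρ.evars → ν x = μ x) ∧
      ∀ a ∈ ρ.head, Atom.subst ν a ∈ I

/-- A database: a finite set of ground atoms (over the predicates of `𝓛`). -/
def IsDatabase (D : Finset Atom) : Prop :=
  ∀ a ∈ D, a.pred ≠ 0 ∧ ∀ t ∈ a.args, ∃ c : ℕ, t = Tm.const c

/-- `I ⊨ D ∪ R`. -/
def Models (I : Set Atom) (D : Finset Atom) (R : Set ERule) : Prop :=
  (∀ a ∈ D, SatF I a.toFml) ∧ ∀ ρ ∈ R, SatRule I ρ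

/-- Conjunctions of atoms (over predicates of `𝓛`). -/
inductive ConjAtoms : Fml → Prop
  | atom (p : ℕ) (ts : List Tm) : p ≠ 0 → ConjAtoms (Fml.atom p ts)
  | and {φ ψ : Fml} : ConjAtoms φ → ConjAtoms ψ → ConjAtoms (Fml.and φ ψ)

/-- A Boolean conjunctive query `∃x⃗ q(x⃗)`. -/
inductive IsBCQ : Fml → Prop
  | base {φ : Fml} : ConjAtoms φ → IsBCQ φ
  | ex {φ : Fml} (x : ℕ) : IsBCQ φ → IsBCQ (Fml.ex x φ)

/-- `(D,R) ⊨ q`. -/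
def KBEntails (D : Finset Atom) (R : Set ERule) (q : Fml) : Prop :=
  ∀ I : Set Atom, IsInterp I → Models I D R → SatF I q

/- ## Sequent calculus G3(R) -/

/-- The instantiated body `β(t⃗,t⃗')` of a rule, as a finite set of formulas. -/
def bodyImg (ρ : ERule) (σ : ℕ → Tm) : Finset Fml :=
  ρ.body.image (fun a => (Atom.subst σ a).toFml)

/-- The instantiated head `α(t⃗',z⃗)` of a rule, as a finite set of formulas. -/
def headImg (ρ : ERule) (ν : ℕ → Tm) : Finset Fml :=
  ρ.head.image (fun a => (Atom.subst ν a).toFml)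

/-- A correct application of the sequent rule `s(ρ)` with premise `Γ' ⊢ Δ` and conclusion `Γ ⊢ Δ`:
    `σ` instantiates `x⃗,y⃗`, the variables `z⃗` are mapped by `ν` to fresh variables
    (not occurring in the conclusion), `Γ` contains the instantiated body, and `Γ'` additionally
    contains the instantiated head. -/
def ERApp (ρ : ERule) (σ ν : ℕ → Tm) (Γ' Γ Δ : Finset Fml) : Prop :=
  (∀ x : ℕ, x ∉ ρ.evars → ν x = σ x) ∧
  (∀ z ∈ ρ.evars, ∃ v : ℕ, ν z = Tm.var v ∧ (∀ χ ∈ Γ, v ∉ χ.fv) ∧ (∀ χ ∈ Δ, v ∉ χ.fv)) ∧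
  (∀ z ∈ ρ.evars, ∀ z' ∈ ρ.evars, ν z = ν z' → z = z') ∧
  bodyImg ρ σ ⊆ Γ ∧
  Γ' = Γ ∪ headImg ρ ν

def ERStepR (ρ : ERule) (Γ' Γ Δ : Finset Fml) : Prop :=
  ∃ σ ν : ℕ → Tm, ERApp ρ σ ν Γ' Γ Δ

def ERStep (R : Set ERule) (Γ' Γ Δ : Finset Fml) : Prop :=
  ∃ ρ ∈ R, ERStepR ρ Γ' Γ Δ

/-- Provability in the sequent calculus `G3(R)` (sequents are pairs of finite sets of formulas;
    an inhabitant corresponds to a proof, i.e. a finite derivation tree whose leaves are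
    instances of the initial rule `(id)`). -/
inductive G3P (R : Set ERule) : Finset Fml → Finset Fml → Prop
  | ax {Γ Δ : Finset Fml} (p : ℕ) (ts : List Tm) :
      Fml.atom p ts ∈ Γ → Fml.atom p ts ∈ Δ → G3P R Γ Δ
  | negL {Γ Δ : Finset Fml} (φ : Fml) :
      G3P R Γ (insert φ Δ) → G3P R (insert (Fml.not φ) Γ) Δ
  | negR {Γ Δ : Finset Fml} (φ : Fml) :
      G3P R (insert φ Γ) Δ → G3P R Γ (insert (Fml.not φ) Δ)
  | andL {Γ Δ : Finset Fml} (φ ψ : Fml) :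
      G3P R (insert φ (insert ψ Γ)) Δ → G3P R (insert (Fml.and φ ψ) Γ) Δ
  | andR {Γ Δ : Finset Fml} (φ ψ : Fml) :
      G3P R Γ (insert φ Δ) → G3P R Γ (insert ψ Δ) → G3P R Γ (insert (Fml.and φ ψ) Δ)
  | exL {Γ Δ : Finset Fml} (x y : ℕ) (φ : Fml) :
      (∀ χ ∈ Γ, y ∉ χ.fv) → (∀ χ ∈ Δ, y ∉ χ.fv) → y ∉ (Fml.ex x φ).fv →
      G3P R (insert (Fml.subst (Tm.var y) x φ) Γ) Δ → G3P R (insert (Fml.ex x φ) Γ) Δ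
  | exR {Γ Δ : Finset Fml} (x : ℕ) (φ : Fml) (t : Tm) :
      G3P R Γ (insert (Fml.ex x φ) (insert (Fml.subst t x φ) Δ)) →
      G3P R Γ (insert (Fml.ex x φ) Δ)
  | er {Γ' Γ Δ : Finset Fml} :
      ERStep R Γ' Γ Δ → G3P R Γ' Δ → G3P R Γ Δ

/-- `R`-validity of the formula interpretation `f(Γ ⊢ Δ) = ⋀Γ → ⋁Δ` of a sequent:
    it is satisfied by every interpretation that models `R` (under every assignment). -/
def SeqValid (R : Set ERule) (Γ Δ : Finset Fml) : Prop :=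
  ∀ I : Set Atom, IsInterp I → (∀ ρ ∈ R, SatRule I ρ) →
    ∀ μ : ℕ → Tm, IsAsg (itms I) μ → (∀ φ ∈ Γ, Sat I μ φ) → ∃ ψ ∈ Δ, Sat I μ ψ

/- ## Triggers and the chase -/

/-- `τ = (ρ,μ)` is a trigger in `I`. -/
def IsTrigger (I : Set Atom) (ρ : ERule) (μ : ℕ → Tm) : Prop :=
  IsAsg (itms I) μ ∧ ∀ a ∈ ρ.body, Atom.subst μ a ∈ I

/-- `ν` extends `μ` by mapping the existential variables `z⃗` injectively to fresh variables
    not occurring in `I`. -/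
def FreshExt (I : Set Atom) (ρ : ERule) (μ ν : ℕ → Tm) : Prop :=
  (∀ x : ℕ, x ∉ ρ.evars → ν x = μ x) ∧
  (∀ z ∈ ρ.evars, ∃ v : ℕ, ν z = Tm.var v ∧ Tm.var v ∉ itms I) ∧
  (∀ z ∈ ρ.evars, ∀ z' ∈ ρ.evars, ν z = ν z' → z = z')

/-- `I' = τ(I) = I ∪ α(μ(y⃗),z⃗)` is an application of the trigger `τ = (ρ,μ)`
    (with fresh variables chosen via `ν`). -/
def TriggerApp (I : Set Atom) (ρ : ERule) (μ ν : ℕ → Tm) (I' : Set Atom) : Prop :=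
  FreshExt I ρ μ ν ∧ I' = I ∪ (Atom.subst ν) '' (↑ρ.head : Set Atom)

/-- One step of a chase derivation using a rule from `R`. -/
def ChaseStep (R : Set ERule) (I I' : Set Atom) : Prop :=
  ∃ ρ ∈ R, ∃ μ ν : ℕ → Tm, IsTrigger I ρ μ ∧ TriggerApp I ρ μ ν I'

/-- The one-step chase `Ch₁(I,R) = ⋃_{τ trigger in I} τ(I)`: every trigger of `I` is applied,
    with fresh variables chosen so that distinct applications introduce distinct fresh
    variables (applications sharing a fresh variable produce the same head instantiation). -/
def OneStepChase (R : Set ERule) (I J : Set Atom) : Prop :=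
  ∃ T : Set (ERule × (ℕ → Tm) × (ℕ → Tm)),
    (∀ p ∈ T, p.1 ∈ R ∧ IsTrigger I p.1 p.2.1 ∧ FreshExt I p.1 p.2.1 p.2.2) ∧
    (∀ ρ ∈ R, ∀ μ : ℕ → Tm, IsTrigger I ρ μ → ∃ ν : ℕ → Tm, (ρ, μ, ν) ∈ T) ∧
    (∀ p ∈ T, ∀ p' ∈ T,
      (∃ z ∈ p.1.evars, ∃ z' ∈ p'.1.evars, p.2.2 z = p'.2.2 z') →
      (Atom.subst p.2.2) '' (↑p.1.head : Set Atom) =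
        (Atom.subst p'.2.2) '' (↑p'.1.head : Set Atom)) ∧
    J = I ∪ ⋃ p ∈ T, (Atom.subst p.2.2) '' (↑p.1.head : Set Atom)

/-- `K n = Ch_n(D,R)`: the breadth-first chase sequence starting from the database `D`;
    `Ch_∞(D,R) = mfy (⋃ n, K n)`. -/
def ChaseSeq (R : Set ERule) (D : Finset Atom) (K : ℕ → Set Atom) : Prop :=
  K 0 = (↑D : Set Atom) ∧ ∀ n : ℕ, OneStepChase R (K n) (K (n + 1))

/- ## Homomorphisms -/

/-- A homomorphism from instance `I` to instance `J`. -/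
def IsHom (I J : Set Atom) (h : Tm → Tm) : Prop :=
  (∀ c : ℕ, h (Tm.const c) = Tm.const c) ∧ ∀ a ∈ I, Atom.map h a ∈ J

/- ## Proof search -/

/-- A bottom-up application of `(∧R)` (passing to one premise): conclusion `Γ ⊢ Δ`,
    premise `Γ' ⊢ Δ'`. -/
def AndRStep (Γ Δ Γ' Δ' : Finset Fml) : Prop :=
  Γ' = Γ ∧ ∃ φ ψ : Fml, Fml.and φ ψ ∈ Δ ∧ (Δ' = insert φ Δ ∨ Δ' = insert ψ Δ)

/-- A bottom-up application of `(∃R)`: conclusion `Γ ⊢ Δ`, premise `Γ' ⊢ Δ'`. -/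
def ExRStep (Γ Δ Γ' Δ' : Finset Fml) : Prop :=
  Γ' = Γ ∧ ∃ (x : ℕ) (φ : Fml) (t : Tm), Fml.ex x φ ∈ Δ ∧ Δ' = insert (Fml.subst t x φ) Δ

/-- The atoms occurring as elements of a set of formulas. -/
def atomsOf (S : Set Fml) : Set Atom := {a : Atom | a.toFml ∈ S}

/-- A failed fair proof-search branch for the input sequent `D ⊢ ∃x⃗ q(x⃗)`:
    an infinite sequence of sequents, each obtained from the previous by a bottom-up application
    of `(∧R)`, `(∃R)` or `s(ρ)` with `ρ ∈ R`, on which no sequent is an instance of `(id)` and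
    whose limit satisfies the saturation conditions. -/
structure FailedBranch (R : Set ERule) (D : Finset Atom) (q : Fml) where
  Γ : ℕ → Finset Fml
  Δ : ℕ → Finset Fml
  init_left : Γ 0 = D.image Atom.toFml
  init_right : Δ 0 = {q}
  step : ∀ i : ℕ,
    AndRStep (Γ i) (Δ i) (Γ (i + 1)) (Δ (i + 1)) ∨
    ExRStep (Γ i) (Δ i) (Γ (i + 1)) (Δ (i + 1)) ∨
    (Δ (i + 1) = Δ i ∧ ERStep R (Γ (i + 1)) (Γ i) (Δ i))
  noax : ∀ i : ℕ, ∀ (p : ℕ) (ts : List Tm), Fml.atom p ts ∈ Γ i → Fml.atom p ts ∉ Δ i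
  sat_and : ∀ φ ψ : Fml, Fml.and φ ψ ∈ (⋃ i, (↑(Δ i) : Set Fml)) →
    φ ∈ (⋃ i, (↑(Δ i) : Set Fml)) ∨ ψ ∈ (⋃ i, (↑(Δ i) : Set Fml))
  sat_ex : ∀ (x : ℕ) (φ : Fml), Fml.ex x φ ∈ (⋃ i, (↑(Δ i) : Set Fml)) →
    ∀ t ∈ tmsOf (⋃ i, (↑(Γ i) : Set Fml)), Fml.subst t x φ ∈ (⋃ i, (↑(Δ i) : Set Fml))
  sat_er : ∀ ρ ∈ R, ∀ μ : ℕ → Tm, IsAsg (tmsOf (⋃ i, (↑(Γ i) : Set Fml))) μ →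
    (∀ a ∈ ρ.body, (Atom.subst μ a).toFml ∈ (⋃ i, (↑(Γ i) : Set Fml))) →
    ∃ ν : ℕ → Tm, (∀ x : ℕ, x ∉ ρ.evars → ν x = μ x) ∧
      (∀ z ∈ ρ.evars, ν z ∈ tmsOf (⋃ i, (↑(Γ i) : Set Fml))) ∧
      ∀ a ∈ ρ.head, (Atom.subst ν a).toFml ∈ (⋃ i, (↑(Γ i) : Set Fml))
section Soundness

lemma interp_top {I : Set Atom} (hI : IsInterp I) (c : ℕ) : topAtom c ∈ I := by
  rw [← hI]; exact Or.inr ⟨c, rfl⟩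

lemma const_mem_itms {I : Set Atom} (hI : IsInterp I) (c : ℕ) : Tm.const c ∈ itms I :=
  Set.mem_biUnion (interp_top hI c) (by simp [Atom.tms, topAtom])

lemma sat_congr {I : Set Atom} : ∀ (φ : Fml) {μ ν : ℕ → Tm},
    (∀ x ∈ φ.fv, μ x = ν x) → (Sat I μ φ ↔ Sat I ν φ)
  | Fml.atom p ts, μ, ν, h => by
      simp only [Sat]
      have he : ts.map (Tm.app μ) = ts.map (Tm.app ν) := by
        apply List.map_congr_left
        intro u hu
        cases u with
        | const c => rfl
        | var y => exact h y hu
      rw [he]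
  | Fml.not φ, μ, ν, h => by
      simp only [Sat]
      exact not_congr (sat_congr φ h)
  | Fml.and φ ψ, μ, ν, h => by
      simp only [Sat]
      exact and_congr (sat_congr φ fun x hx => h x (Or.inl hx))
        (sat_congr ψ fun x hx => h x (Or.inr hx))
  | Fml.ex y φ, μ, ν, h => by
      simp only [Sat]
      apply exists_congr; intro t
      apply and_congr_right; intro _
      apply sat_congr φ
      intro z hz
      by_cases hzy : z = y
      · subst hzy; rw [Function.update_self, Function.update_self]
      · rw [Function.update_of_ne hzy, Function.update_of_ne hzy]
        exact h z ⟨hz, hzy⟩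

lemma app_app (μ σ : ℕ → Tm) (u : Tm) :
    Tm.app μ (Tm.app σ u) = Tm.app (fun v => Tm.app μ (σ v)) u := by
  cases u <;> rfl

lemma app_subst (μ : ℕ → Tm) (t : Tm) (x : ℕ) (u : Tm) :
    Tm.app μ (Tm.subst t x u) = Tm.app (Function.update μ x (Tm.app μ t)) u := by
  cases u with
  | const c => rfl
  | var y =>
      by_cases h : y = x
      · subst h; simp [Tm.subst, Tm.app]
      · simp [Tm.subst, Tm.app, h]

lemma sat_subst_conj {I : Set Atom} {φ : Fml} (hφ : ConjAtoms φ) (t : Tm) (x : ℕ) (μ : ℕ → Tm) :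
    Sat I μ (Fml.subst t x φ) ↔ Sat I (Function.update μ x (Tm.app μ t)) φ := by
  induction hφ with
  | atom p ts hp =>
      simp only [Fml.subst, Sat, List.map_map]
      have he : ts.map (Tm.app μ ∘ Tm.subst t x)
          = ts.map (Tm.app (Function.update μ x (Tm.app μ t))) :=
        List.map_congr_left fun u _ => app_subst μ t x u
      rw [he]
  | and hφ1 hψ1 ih1 ih2 =>
      simp only [Fml.subst, Sat]
      exact and_congr ih1 ih2

lemma conj_fv_mem {I : Set Atom} {φ : Fml} (hφ : ConjAtoms φ) :
    ∀ {x : ℕ}, x ∈ φ.fv → ∀ {μ : ℕ → Tm}, Sat I μ φ → μ x ∈ itms I := by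
  induction hφ with
  | atom p ts hp =>
      intro x hx μ hsat
      simp only [Sat] at hsat
      refine Set.mem_biUnion hsat ?_
      have hts : Tm.var x ∈ ts := hx
      have : μ x ∈ ts.map (Tm.app μ) := by
        refine List.mem_map.mpr ⟨Tm.var x, hts, rfl⟩
      exact this
  | and h1 h2 ih1 ih2 =>
      intro x hx μ hsat
      simp only [Sat] at hsat
      rcases hx with hx | hx
      · exact ih1 hx hsat.1
      · exact ih2 hx hsat.2

lemma tm_subst_self {t : Tm} {x : ℕ} {u : Tm} (h : u ≠ Tm.var x) : Tm.subst t x u = u := by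
  cases u with
  | const c => rfl
  | var y =>
      have hy : y ≠ x := fun hh => h (by rw [hh])
      simp [Tm.subst, hy]

lemma subst_not_fv (t : Tm) (x : ℕ) : ∀ (φ : Fml), x ∉ φ.fv → Fml.subst t x φ = φ
  | Fml.atom p ts, h => by
      simp only [Fml.subst]
      congr 1
      have he : ∀ u ∈ ts, Tm.subst t x u = u := by
        intro u hu
        apply tm_subst_self
        rintro rfl
        exact h hu
      calc ts.map (Tm.subst t x) = ts.map id := List.map_congr_left he
        _ = ts := List.map_id ts
  | Fml.not φ, h => by
      simp only [Fml.subst]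
      rw [subst_not_fv t x φ h]
  | Fml.and φ ψ, h => by
      simp only [Fml.subst]
      rw [subst_not_fv t x φ (fun hx => h (Or.inl hx)),
        subst_not_fv t x ψ (fun hx => h (Or.inr hx))]
  | Fml.ex y φ, h => by
      by_cases hyx : y = x
      · simp [Fml.subst, hyx]
      · simp only [Fml.subst, if_neg hyx]
        rw [subst_not_fv t x φ (fun hx => h ⟨hx, fun e => hyx e.symm⟩)]

lemma conj_subst {φ : Fml} (h : ConjAtoms φ) (t : Tm) (x : ℕ) : ConjAtoms (Fml.subst t x φ) := by
  induction h with
  | atom p ts hp => exact ConjAtoms.atom p _ hp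
  | and h1 h2 ih1 ih2 => exact ConjAtoms.and ih1 ih2

lemma bcq_subst {φ : Fml} (h : IsBCQ φ) (t : Tm) (x : ℕ) : IsBCQ (Fml.subst t x φ) := by
  induction h with
  | base hc => exact IsBCQ.base (conj_subst hc t x)
  | ex y hφ ih =>
      by_cases hyx : y = x
      · simpa [Fml.subst, hyx] using IsBCQ.ex y hφ
      · simpa [Fml.subst, hyx] using IsBCQ.ex y ih

/-- Key lemma: for BCQ formulas, (possibly capturing) substitution instances imply the
existential, via a diagonal witness. -/
lemma sat_subst_ex {I : Set Atom} (hI : IsInterp I) (t : Tm) (x : ℕ) :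
    ∀ {φ : Fml}, IsBCQ φ → ∀ μ : ℕ → Tm, Sat I μ (Fml.subst t x φ) →
      ∃ s ∈ itms I, Sat I (Function.update μ x s) φ := by
  intro φ hφ
  induction hφ with
  | @base ψ hc =>
      intro μ hsat
      by_cases hx : x ∈ ψ.fv
      · rw [sat_subst_conj hc] at hsat
        refine ⟨Tm.app μ t, ?_, hsat⟩
        have hh := conj_fv_mem hc hx hsat
        simpa using hh
      · rw [subst_not_fv t x ψ hx] at hsat
        refine ⟨Tm.const 0, const_mem_itms hI 0, ?_⟩
        refine (sat_congr ψ ?_).mpr hsat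
        intro z hz
        have hzx : z ≠ x := fun e => hx (e ▸ hz)
        simp [Function.update, hzx]
  | @ex φ' y hφ' ih =>
      intro μ hsat
      by_cases hyx : y = x
      · subst hyx
        rw [show Fml.subst t y (Fml.ex y φ') = Fml.ex y φ' from by simp [Fml.subst]] at hsat
        simp only [Sat] at hsat ⊢
        obtain ⟨s, hs, hsat⟩ := hsat
        exact ⟨s, hs, s, hs, by rwa [Function.update_idem]⟩
      · rw [show Fml.subst t x (Fml.ex y φ') = Fml.ex y (Fml.subst t x φ') from by
          simp [Fml.subst, hyx]] at hsat
        simp only [Sat] at hsat ⊢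
        obtain ⟨s, hs, hsat⟩ := hsat
        obtain ⟨r, hr, hsat⟩ := ih _ hsat
        refine ⟨r, hr, s, hs, ?_⟩
        rwa [Function.update_comm (fun e => hyx e.symm)]

theorem g3_sound {R : Set ERule} {Γ Δ : Finset Fml} (h : G3P R Γ Δ) :
    (∀ χ ∈ Γ, ∃ p ts, χ = Fml.atom p ts) → (∀ χ ∈ Δ, IsBCQ χ) → SeqValid R Γ Δ := by
  induction h with
  | ax p ts h1 h2 =>
      intro hΓ hΔ I hI hrules μ hμ hsat
      exact ⟨_, h2, hsat _ h1⟩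
  | negL φ hprem ih =>
      intro hΓ hΔ
      obtain ⟨p, ts, he⟩ := hΓ _ (Finset.mem_insert_self _ _)
      exact Fml.noConfusion he
  | negR φ hprem ih =>
      intro hΓ hΔ
      have hb := hΔ _ (Finset.mem_insert_self _ _)
      cases hb with
      | base hc => cases hc
  | andL φ ψ hprem ih =>
      intro hΓ hΔ
      obtain ⟨p, ts, he⟩ := hΓ _ (Finset.mem_insert_self _ _)
      exact Fml.noConfusion he
  | @andR Γ0 Δ0 φ ψ h1 h2 ih1 ih2 =>
      intro hΓ hΔ
      have hΔ0 : ∀ χ ∈ Δ0, IsBCQ χ := fun χ hχ => hΔ χ (Finset.mem_insert_of_mem hχ)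
      have hand := hΔ _ (Finset.mem_insert_self _ _)
      have hconj : ConjAtoms (Fml.and φ ψ) := by
        cases hand with
        | base hc => exact hc
      have hcφ : ConjAtoms φ := by cases hconj with | and a b => exact a
      have hcψ : ConjAtoms ψ := by cases hconj with | and a b => exact b
      have v1 := ih1 hΓ (by
        intro χ hχ
        rcases Finset.mem_insert.mp hχ with rfl | hχ
        · exact IsBCQ.base hcφ
        · exact hΔ0 _ hχ)
      have v2 := ih2 hΓ (by
        intro χ hχ
        rcases Finset.mem_insert.mp hχ with rfl | hχ
        · exact IsBCQ.base hcψ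
        · exact hΔ0 _ hχ)
      intro I hI hrules μ hμ hsat
      obtain ⟨ψ1, hψ1, hs1⟩ := v1 I hI hrules μ hμ hsat
      obtain ⟨ψ2, hψ2, hs2⟩ := v2 I hI hrules μ hμ hsat
      rcases Finset.mem_insert.mp hψ1 with rfl | h1'
      · rcases Finset.mem_insert.mp hψ2 with rfl | h2'
        · refine ⟨_, Finset.mem_insert_self _ _, ?_⟩
          exact (show Sat I μ (Fml.and _ _) from ⟨hs1, hs2⟩)
        · exact ⟨ψ2, Finset.mem_insert_of_mem h2', hs2⟩
      · exact ⟨ψ1, Finset.mem_insert_of_mem h1', hs1⟩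
  | exL x y φ hf1 hf2 hf3 hprem ih =>
      intro hΓ hΔ
      obtain ⟨p, ts, he⟩ := hΓ _ (Finset.mem_insert_self _ _)
      exact Fml.noConfusion he
  | @exR Γ0 Δ0 x φ t hprem ih =>
      intro hΓ hΔ
      have hex : IsBCQ (Fml.ex x φ) := hΔ _ (Finset.mem_insert_self _ _)
      have hφ : IsBCQ φ := by
        cases hex with
        | base hc => cases hc
        | ex y h => exact h
      have v := ih hΓ (by
        intro χ hχ
        rcases Finset.mem_insert.mp hχ with rfl | hχ
        · exact hex
        rcases Finset.mem_insert.mp hχ with rfl | hχ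
        · exact bcq_subst hφ t x
        · exact hΔ _ (Finset.mem_insert_of_mem hχ))
      intro I hI hrules μ hμ hsat
      obtain ⟨ψ', hψ', hs⟩ := v I hI hrules μ hμ hsat
      rcases Finset.mem_insert.mp hψ' with rfl | hψ'
      · exact ⟨_, Finset.mem_insert_self _ _, hs⟩
      rcases Finset.mem_insert.mp hψ' with rfl | hψ'
      · obtain ⟨s, hsmem, hss⟩ := sat_subst_ex hI t x hφ μ hs
        refine ⟨Fml.ex x φ, Finset.mem_insert_self _ _, ?_⟩
        simp only [Sat]
        exact ⟨s, hsmem, hss⟩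
      · exact ⟨ψ', Finset.mem_insert_of_mem hψ', hs⟩
  | @er Γ' Γc Δc hstep hprem ih =>
      intro hΓ hΔ
      obtain ⟨ρ, hρR, σ, ν, hoff, hfresh, hinj, hbody, hΓ'eq⟩ := hstep
      have hΓ' : ∀ χ ∈ Γ', ∃ p ts, χ = Fml.atom p ts := by
        intro χ hχ
        rw [hΓ'eq] at hχ
        rcases Finset.mem_union.mp hχ with hχ | hχ
        · exact hΓ _ hχ
        · obtain ⟨a, _, rfl⟩ := Finset.mem_image.mp hχ
          exact ⟨_, _, rfl⟩
      have v := ih hΓ' hΔ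
      intro I hI hrules μ hμ hsat
      classical
      set σμ : ℕ → Tm := fun w => Tm.app μ (σ w) with hσμ
      have hasgσμ : IsAsg (itms I) σμ := by
        intro w
        show Tm.app μ (σ w) ∈ itms I
        cases hσw : σ w with
        | const c => exact const_mem_itms hI c
        | var v2 => exact hμ v2
      have hbodyI : ∀ a ∈ ρ.body, Atom.subst σμ a ∈ I := by
        intro a ha
        have hmem : (Atom.subst σ a).toFml ∈ Γc := hbody (Finset.mem_image_of_mem _ ha)
        have hs := hsat _ hmem
        simp only [Atom.toFml, Atom.subst, Atom.map, Sat, List.map_map] at hs ⊢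
        have he : a.args.map (Tm.app μ ∘ Tm.app σ) = a.args.map (Tm.app σμ) :=
          List.map_congr_left fun u _ => app_app μ σ u
        rw [← he]
        exact hs
      obtain ⟨ν', hν'asg, hν'off, hν'head⟩ := hrules ρ hρR σμ hasgσμ hbodyI
      set μ' : ℕ → Tm :=
        fun u => if h : ∃ z, z ∈ ρ.evars ∧ ν z = Tm.var u then ν' h.choose else μ u with hμ'def
      have F1 : ∀ u, (¬ ∃ z, z ∈ ρ.evars ∧ ν z = Tm.var u) → μ' u = μ u := by
        intro u hu
        simp only [hμ'def]
        rw [dif_neg hu]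
      have F2 : ∀ z ∈ ρ.evars, ∀ u, ν z = Tm.var u → μ' u = ν' z := by
        intro z hz u hzu
        have hex2 : ∃ z', z' ∈ ρ.evars ∧ ν z' = Tm.var u := ⟨z, hz, hzu⟩
        simp only [hμ'def]
        rw [dif_pos hex2]
        have hspec := hex2.choose_spec
        have heq := hinj _ hspec.1 z hz (hspec.2.trans hzu.symm)
        rw [heq]
      have F3 : IsAsg (itms I) μ' := by
        intro u
        simp only [hμ'def]
        split
        · exact hν'asg _
        · exact hμ u
      have F4 : ∀ χ ∈ Γc, ∀ w ∈ χ.fv, μ' w = μ w := by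
        intro χ hχ w hw
        apply F1
        rintro ⟨z, hz, hzw⟩
        obtain ⟨vv, hv1, hv2, hv3⟩ := hfresh z hz
        rw [hv1] at hzw
        obtain rfl := Tm.var.inj hzw
        exact hv2 χ hχ hw
      have F4Δ : ∀ χ ∈ Δc, ∀ w ∈ χ.fv, μ' w = μ w := by
        intro χ hχ w hw
        apply F1
        rintro ⟨z, hz, hzw⟩
        obtain ⟨vv, hv1, hv2, hv3⟩ := hfresh z hz
        rw [hv1] at hzw
        obtain rfl := Tm.var.inj hzw
        exact hv3 χ hχ hw
      have hsatΓ' : ∀ χ ∈ Γ', Sat I μ' χ := by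
        intro χ hχ
        rw [hΓ'eq] at hχ
        rcases Finset.mem_union.mp hχ with hχ | hχ
        · exact (sat_congr χ (fun w hw => F4 χ hχ w hw)).mpr (hsat _ hχ)
        · obtain ⟨a, ha, rfl⟩ := Finset.mem_image.mp hχ
          simp only [Atom.toFml, Atom.subst, Atom.map, Sat, List.map_map]
          have harg : ∀ u ∈ a.args, (Tm.app μ' ∘ Tm.app ν) u = Tm.app ν' u := by
            intro u hu
            cases u with
            | const c => rfl
            | var w =>
                show Tm.app μ' (ν w) = ν' w
                by_cases hw : w ∈ ρ.evars
                · obtain ⟨vv, hv1, hv2, hv3⟩ := hfresh w hw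
                  rw [hv1]
                  exact F2 w hw vv hv1
                · rw [hoff w hw, hν'off w hw]
                  show Tm.app μ' (σ w) = Tm.app μ (σ w)
                  cases hσw : σ w with
                  | const c => rfl
                  | var v2 =>
                      show μ' v2 = μ v2
                      apply F1
                      rintro ⟨z, hz, hzv⟩
                      obtain ⟨vv, hv1, hv2, hv3⟩ := hfresh z hz
                      rw [hv1] at hzv
                      obtain rfl := Tm.var.inj hzv
                      obtain ⟨b, hb, hxb⟩ := ρ.head_frontier a ha w hu hw
                      have hmemb : (Atom.subst σ b).toFml ∈ Γc :=
                        hbody (Finset.mem_image_of_mem _ hb)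
                      apply hv2 _ hmemb
                      show Tm.var vv ∈ b.args.map (Tm.app σ)
                      refine List.mem_map.mpr ⟨Tm.var w, hxb, ?_⟩
                      show σ w = Tm.var vv
                      exact hσw
          have he : a.args.map (Tm.app μ' ∘ Tm.app ν) = a.args.map (Tm.app ν') :=
            List.map_congr_left harg
          rw [he]
          exact hν'head a ha
      obtain ⟨ψ, hψ, hsψ⟩ := v I hI hrules μ' F3 hsatΓ'
      exact ⟨ψ, hψ, (sat_congr ψ (fun w hw => F4Δ ψ hψ w hw)).mp hsψ⟩

end Soundness

/-- Theorem 2, claim 1: if there is a proof of the sequent `D ⊢ ∃x⃗ q(x⃗)`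
    in `G3(R)`, then `(D,R) ⊨ ∃x⃗ q(x⃗)`. -/
theorem proof_implies_entailment (R : Set ERule) (hR : R.Finite)
    (D : Finset Atom) (hD : IsDatabase D)
    (q : Fml) (hq : IsBCQ q) (hqclosed : Fml.fv q = ∅)
    (h : G3P R (D.image Atom.toFml) {q}) :
    KBEntails D R q := by
  have hvalid := g3_sound h
    (by
      intro χ hχ
      obtain ⟨a, _, rfl⟩ := Finset.mem_image.mp hχ
      exact ⟨_, _, rfl⟩)
    (by
      intro χ hχ
      rw [Finset.mem_singleton] at hχ
      subst hχ
      exact hq)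
  intro I hI hmod μ hμ
  have hh := hvalid I hI hmod.2 μ hμ (by
    intro χ hχ
    obtain ⟨a, ha, rfl⟩ := Finset.mem_image.mp hχ
    exact hmod.1 a ha μ hμ)
  obtain ⟨ψ, hψ, hsψ⟩ := hh
  rw [Finset.mem_singleton] at hψ
  subst hψ
  exact hsψ
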